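/- arXiv:1903.08754 — 2 statements merged into one kernel-verified Lean document; each statement's English description precedes it below -/
import Mathlib

section
/- For a metric space X, functions f, g : X → [−∞,∞], and ε, ρ ≥ 0: if inf f, inf g ∈ [−ρ, ρ−ε) and for every γ > 0 both γ-argmin f ∩ B_X(ρ) and γ-argmin g ∩ B_X(ρ) are nonempty, then |inf f − inf g| ≤ dl_ρ(epi f, epi g). -/
open Set Filter Metric ENNReal Pointwise Classical

noncomputable section

/-- Excess of `A` over `B`: `sup_{x ∈ A} dist(x,B)`, valued in `ℝ≥0∞`
(so it is `0` when `A = ∅` and `∞` when `A ≠ ∅`, `B = ∅`). -/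
def exs {X : Type*} [PseudoEMetricSpace X] (A B : Set X) : ℝ≥0∞ :=
  ⨆ x ∈ A, EMetric.infEdist x B

/-- Truncated Hausdorff distance with centroid `c` and radius `ρ`. -/
def dl {X : Type*} [PseudoEMetricSpace X] (c : X) (ρ : ℝ≥0∞) (A B : Set X) : ℝ≥0∞ :=
  max (exs (A ∩ EMetric.closedBall c ρ) B) (exs (B ∩ EMetric.closedBall c ρ) A)

/-- Epigraph of an extended-real-valued function. -/
def epi {X : Type*} (f : X → EReal) : Set (X × ℝ) :=
  {p | f p.1 ≤ (p.2 : EReal)}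

/-- Absolute difference of extended reals, valued in `ℝ≥0∞`. -/
def eAbsDiff (a b : EReal) : ℝ≥0∞ :=
  sInf {ε : ℝ≥0∞ | a ≤ b + (ε : EReal) ∧ b ≤ a + (ε : EReal)}

open Topology

/-!
If `(x, α)` lies in `epi f` within the ball of radius `ρ` and is `b`-close to some `(y, β) ∈ epi g`,
then `inf g ≤ g y ≤ β < α + b`. Taking `x` a `γ`-minimiser of `f` in `B_X(ρ)` and `α = inf f + γ`
(which stays in `[-ρ, ρ]` for small `γ`) gives `inf g < inf f + γ + b` whenever
`exs(epi f ∩ B(ρ); epi g) < b`; letting `γ → 0` and exchanging `f` and `g` bounds `|inf f - inf g|`.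
-/

lemma infEDist_le_exs {X : Type*} [PseudoEMetricSpace X] {A B : Set X} {p : X} (hp : p ∈ A) :
    infEDist p B ≤ exs A B :=
  le_iSup₂ (f := fun p (_ : p ∈ A) => infEDist p B) p hp

lemma eAbsDiff_le_of_forall_lt {a b : EReal} {d : ℝ≥0∞}
    (h : ∀ r : ℝ, d < ENNReal.ofReal r → a ≤ b + r ∧ b ≤ a + r) : eAbsDiff a b ≤ d := by
  refine le_of_forall_gt_imp_ge_of_dense fun e hde => ?_
  rcases eq_or_ne e ⊤ with rfl | he
  · exact le_top
  rw [← ENNReal.ofReal_toReal he] at hde ⊢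
  refine sInf_le ?_
  rw [mem_ofPred_eq, EReal.coe_ennreal_ofReal, max_eq_left toReal_nonneg]
  exact h _ hde

lemma EReal.exists_eq_coe_of_le_of_lt {a : EReal} {ρ ε : ℝ} (hε : 0 ≤ ε)
    (h₁ : ((-ρ : ℝ) : EReal) ≤ a) (h₂ : a < ((ρ - ε : ℝ) : EReal)) :
    ∃ m : ℝ, a = m ∧ -ρ ≤ m ∧ m < ρ := by
  induction a using EReal.rec with
  | bot => exact absurd h₁ (not_le.2 (EReal.bot_lt_coe _))
  | top => exact absurd h₂ (not_lt.2 le_top)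
  | coe m =>
    refine ⟨m, rfl, EReal.coe_le_coe_iff.1 h₁, ?_⟩
    linarith [EReal.coe_lt_coe_iff.1 h₂]

lemma iInf_lt_of_infEDist_epi_lt {X : Type*} [PseudoEMetricSpace X] {g : X → EReal}
    {p : X × ℝ} {b : ℝ} (h : infEDist p (epi g) < ENNReal.ofReal b) :
    ⨅ x, g x < ((p.2 + b : ℝ) : EReal) := by
  obtain ⟨⟨y, β⟩, hq, hpq⟩ := Metric.infEDist_lt_iff.1 h
  have hβ : edist p.2 β < ENNReal.ofReal b := (le_max_right _ _).trans_lt hpq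
  rw [edist_dist, ENNReal.ofReal_lt_ofReal_iff_of_nonneg dist_nonneg, Real.dist_eq,
    abs_lt] at hβ
  calc ⨅ x, g x ≤ g y := iInf_le _ _
    _ ≤ β := hq
    _ < _ := EReal.coe_lt_coe_iff.2 (by linarith)

lemma iInf_le_add_of_exs_epi_lt {X : Type*} [PseudoMetricSpace X] {c : X} {f g : X → EReal}
    {ρ m b : ℝ} (hm : ⨅ x, f x = m) (hmρ : -ρ ≤ m) (hρm : m < ρ)
    (hf : ∀ γ : ℝ, 0 < γ →
      ({x | f x < ⊤ ∧ f x ≤ (⨅ x', f x') + ((γ : ℝ) : EReal)} ∩ closedBall c ρ).Nonempty)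
    (hexs : exs (epi f ∩ closedEBall (c, (0 : ℝ)) (ENNReal.ofReal ρ)) (epi g)
      < ENNReal.ofReal b) :
    ⨅ x, g x ≤ ((m + b : ℝ) : EReal) := by
  have hlim : Tendsto (fun γ : ℝ => ((m + γ + b : ℝ) : EReal)) (𝓝[>] 0) (𝓝 ((m + b : ℝ))) := by
    have : Continuous fun γ : ℝ => ((m + γ + b : ℝ) : EReal) :=
      EReal.continuous_coe_iff.2 (by fun_prop)
    simpa using (this.tendsto 0).mono_left nhdsWithin_le_nhds
  refine ge_of_tendsto hlim ?_
  filter_upwards [Ioo_mem_nhdsGT (sub_pos.2 hρm)] with γ ⟨hγ, hγρ⟩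
  obtain ⟨x, ⟨-, hx⟩, hxc⟩ := hf γ hγ
  have hρ : 0 ≤ ρ := by linarith
  have hmem : (x, m + γ) ∈ epi f ∩ closedEBall (c, (0 : ℝ)) (ENNReal.ofReal ρ) := by
    refine ⟨by rwa [epi, mem_ofPred_eq, EReal.coe_add, ← hm], ?_⟩
    rw [closedEBall_ofReal hρ, ← closedBall_prod_same]
    exact ⟨hxc, by rw [mem_closedBall, Real.dist_0_eq_abs, abs_le]; constructor <;> linarith⟩
  exact (iInf_lt_of_infEDist_epi_lt ((infEDist_le_exs hmem).trans_lt hexs)).le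

theorem stmt8_general {X : Type*} [MetricSpace X] (c : X) (f g : X → EReal) (ε ρ : ℝ)
    (hε : 0 ≤ ε)
    (hf1 : ((-ρ : ℝ) : EReal) ≤ ⨅ x, f x) (hf2 : ⨅ x, f x < ((ρ - ε : ℝ) : EReal))
    (hg1 : ((-ρ : ℝ) : EReal) ≤ ⨅ x, g x) (hg2 : ⨅ x, g x < ((ρ - ε : ℝ) : EReal))
    (hfargmin : ∀ γ : ℝ, 0 < γ →
      ({x | f x < ⊤ ∧ f x ≤ (⨅ x', f x') + ((γ : ℝ) : EReal)}
        ∩ Metric.closedBall c ρ).Nonempty)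
    (hgargmin : ∀ γ : ℝ, 0 < γ →
      ({x | g x < ⊤ ∧ g x ≤ (⨅ x', g x') + ((γ : ℝ) : EReal)}
        ∩ Metric.closedBall c ρ).Nonempty) :
    eAbsDiff (⨅ x, f x) (⨅ x, g x)
      ≤ dl (c, (0 : ℝ)) (ENNReal.ofReal ρ) (epi f) (epi g) := by
  obtain ⟨m, hm, hmρ, hρm⟩ := EReal.exists_eq_coe_of_le_of_lt hε hf1 hf2
  obtain ⟨n, hn, hnρ, hρn⟩ := EReal.exists_eq_coe_of_le_of_lt hε hg1 hg2
  refine eAbsDiff_le_of_forall_lt fun r hr => ⟨?_, ?_⟩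
  · rw [hn, ← EReal.coe_add]
    exact iInf_le_add_of_exs_epi_lt hn hnρ hρn hgargmin ((le_max_right _ _).trans_lt hr)
  · rw [hm, ← EReal.coe_add]
    exact iInf_le_add_of_exs_epi_lt hm hmρ hρm hfargmin ((le_max_left _ _).trans_lt hr)

/-- approximation of infima. -/
theorem stmt8 {X : Type*} [MetricSpace X] (c : X) (f g : X → EReal) (ε ρ : ℝ)
    (hε : 0 ≤ ε) (hρ : 0 ≤ ρ)
    (hf1 : ((-ρ : ℝ) : EReal) ≤ ⨅ x, f x) (hf2 : ⨅ x, f x < ((ρ - ε : ℝ) : EReal))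
    (hg1 : ((-ρ : ℝ) : EReal) ≤ ⨅ x, g x) (hg2 : ⨅ x, g x < ((ρ - ε : ℝ) : EReal))
    (hfargmin : ∀ γ : ℝ, 0 < γ →
      ({x | f x < ⊤ ∧ f x ≤ (⨅ x', f x') + ((γ : ℝ) : EReal)}
        ∩ Metric.closedBall c ρ).Nonempty)
    (hgargmin : ∀ γ : ℝ, 0 < γ →
      ({x | g x < ⊤ ∧ g x ≤ (⨅ x', g x') + ((γ : ℝ) : EReal)}
        ∩ Metric.closedBall c ρ).Nonempty) :
    eAbsDiff (⨅ x, f x) (⨅ x, g x)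
      ≤ dl (c, (0 : ℝ)) (ENNReal.ofReal ρ) (epi f) (epi g) :=
  stmt8_general c f g ε ρ hε hf1 hf2 hg1 hg2 hfargmin hgargmin

end
end

section
/- Let X, Y be normed linear spaces, S_1, T_1 : X ⇉ Y nonempty-valued and Lipschitz continuous with common modulus κ : ℝ₊ → ℝ₊ relative to ρ* ∈ [0,∞] (i.e., dl_{ρ*}(S_1(x), S_1(x')) ≤ κ(ρ)‖x−x'‖ for x,x' ∈ B_X(ρ), and similarly for T_1), and S_2, T_2 : X ⇉ Y with nonempty graphs. Suppose ρ ≥ 0, ρ' is such that S_1(x), T_1(x) ⊂ B_Y(ρ') for all x ∈ B_X(ρ), ρ̄ ≥ ρ + ρ', ρ̂ > ρ + dl_{ρ̄}(gph S_2, gph T_2), and ρ* > 3ρ' + κ(ρ̂)(ρ̂−ρ). Then dl_ρ(gph(S_1+S_2), gph(T_1+T_2)) ≤ sup_{x∈B_X(ρ)} dl_{ρ*}(S_1(x), T_1(x)) + (1+κ(ρ̂))·dl_{ρ̄}(gph S_2, gph T_2). -/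
/-!
Let `(x, y₁ + y₂) ∈ gph (S₁ + S₂)` lie in the ball of radius `ρ`, with `y₁ ∈ S₁ x`, `y₂ ∈ S₂ x`.
Then `‖y₁‖ ≤ ρ'`, so `y₁` is within `σ = sup_{x ∈ B_X(ρ)} dl_{ρ*}(S₁ x, T₁ x)` of `T₁ x`, and
`‖y₂‖ ≤ ρ + ρ' ≤ ρ̄`, so `(x, y₂)` is within `d = dl_{ρ̄}(gph S₂, gph T₂)` of `gph T₂`.
If `(x', y₂') ∈ gph T₂` is at distance `e < ρ̂ - ρ` from `(x, y₂)`, then `x' ∈ B_X(ρ̂)`, and since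
`T₁ x ⊆ B_Y(ρ') ⊆ B_Y(ρ*)` the Lipschitz property carries `T₁ x` into `T₁ x'` at cost `κ(ρ̂) e`;
hence `(x, y₁ + y₂)` is within `σ + (1 + κ(ρ̂)) e` of `gph (T₁ + T₂)`. Since `d < ρ̂ - ρ`, taking
the infimum over such `(x', y₂')` gives `σ + (1 + κ(ρ̂)) d`. The infima are taken directly in
`ℝ≥0∞`, so no approximate minimizers are needed.
-/

open Set Filter Metric ENNReal Pointwise Classical

noncomputable section

section PseudoEMetric

variable {α : Type*} [PseudoEMetricSpace α]

lemma dl_comm (c : α) (r : ℝ≥0∞) (A B : Set α) : dl c r A B = dl c r B A :=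
  max_comm _ _

lemma infEDist_le_exs_s19 {a : α} {A : Set α} (B : Set α) (ha : a ∈ A) : infEDist a B ≤ exs A B :=
  le_iSup₂_of_le a ha le_rfl

lemma infEDist_le_dl {c a : α} {r : ℝ≥0∞} {A B : Set α} (ha : a ∈ A)
    (har : a ∈ closedEBall c r) : infEDist a B ≤ dl c r A B :=
  le_max_of_le_left (infEDist_le_exs_s19 B ⟨ha, har⟩)

lemma exs_le_dl_of_subset {c : α} {r : ℝ≥0∞} {A : Set α} (B : Set α)
    (hA : A ⊆ closedEBall c r) : exs A B ≤ dl c r A B :=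
  le_max_of_le_left (iSup₂_le fun _ ha => infEDist_le_exs_s19 B ⟨ha, hA ha⟩)

lemma le_mul_infEDist_add_of_forall {p : α} {s : Set α} {f a c : ℝ≥0∞} (hc₀ : c ≠ 0)
    (hc : c ≠ ⊤) (h : ∀ q ∈ s, f ≤ c * edist p q + a) : f ≤ c * infEDist p s + a := by
  simp only [infEDist, ENNReal.mul_iInf_of_ne hc₀ hc, ENNReal.iInf_add]
  exact le_iInf₂ h

lemma le_infEDist_add_of_forall {p : α} {s : Set α} {f a : ℝ≥0∞}
    (h : ∀ q ∈ s, f ≤ edist p q + a) : f ≤ infEDist p s + a := by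
  simpa using le_mul_infEDist_add_of_forall one_ne_zero ENNReal.one_ne_top (by simpa using h)

lemma infEDist_le_infEDist_add_exs (p : α) (s t : Set α) :
    infEDist p t ≤ infEDist p s + exs s t :=
  le_infEDist_add_of_forall fun q hq =>
    infEDist_le_infEDist_add_edist.trans <| by
      rw [add_comm]; gcongr; exact infEDist_le_exs_s19 t hq

lemma infEDist_inter_eball_of_lt {p : α} {s : Set α} {R : ℝ≥0∞} (hR : infEDist p s < R) :
    infEDist p (s ∩ eball p R) = infEDist p s := by
  refine le_antisymm (le_of_forall_gt fun c hc => ?_) (infEDist_anti inter_subset_left)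
  obtain ⟨q, hq, hpq⟩ := infEDist_lt_iff.1 (lt_min hc hR)
  have hq' : q ∈ s ∩ eball p R := ⟨hq, mem_eball'.2 (hpq.trans_le (min_le_right _ _))⟩
  exact (infEDist_le_edist_of_mem hq').trans_lt (hpq.trans_le (min_le_left _ _))

end PseudoEMetric

def gph {X Y : Type*} (S : X → Set Y) : Set (X × Y) := {p | p.2 ∈ S p.1}

section Graph

variable {X Y : Type*} [PseudoEMetricSpace X] [SeminormedAddCommGroup Y]

lemma infEDist_gph_add_le_of_mem {T₁ T₂ : X → Set Y} {x x' : X} {y₁ y₂ y₂' : Y}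
    (hy₂' : y₂' ∈ T₂ x') :
    infEDist (x, y₁ + y₂) (gph (T₁ + T₂)) ≤ infEDist y₁ (T₁ x') + edist (x, y₂) (x', y₂') := by
  refine le_infEDist_add_of_forall fun w hw => ?_
  calc infEDist (x, y₁ + y₂) (gph (T₁ + T₂))
      ≤ edist (x, y₁ + y₂) (x', w + y₂') := infEDist_le_edist_of_mem (Set.add_mem_add hw hy₂')
    _ ≤ max (edist x x') (edist y₁ w + edist y₂ y₂') := by
      rw [Prod.edist_eq]; gcongr; exact edist_add_add_le _ _ _ _
    _ ≤ edist y₁ w + edist (x, y₂) (x', y₂') := by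
      rw [Prod.edist_eq]
      exact max_le (le_add_left (le_max_left _ _)) (add_le_add le_rfl (le_max_right _ _))

lemma infEDist_gph_add_le {T₁ T₂ : X → Set Y} {x : X} {y₁ y₂ : Y} {σ K R : ℝ≥0∞}
    (hK : K ≠ ⊤) (hσ : infEDist y₁ (T₁ x) ≤ σ)
    (hT₁ : ∀ x', edist x x' < R → exs (T₁ x) (T₁ x') ≤ K * edist x x')
    (hR : infEDist (x, y₂) (gph T₂) < R) :
    infEDist (x, y₁ + y₂) (gph (T₁ + T₂)) ≤ σ + (1 + K) * infEDist (x, y₂) (gph T₂) := by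
  -- Since the infimum is below `R`, only points of `gph T₂` within `R` of `(x, y₂)` matter.
  rw [← infEDist_inter_eball_of_lt hR, add_comm σ]
  refine le_mul_infEDist_add_of_forall (by simp) (ENNReal.add_ne_top.2 ⟨ENNReal.one_ne_top, hK⟩) ?_
  rintro ⟨x', y₂'⟩ ⟨hq, hqR⟩
  have hxx' : edist x x' ≤ edist (x, y₂) (x', y₂') := by rw [Prod.edist_eq]; exact le_max_left _ _
  set e := edist (x, y₂) (x', y₂')
  have hy₁ : infEDist y₁ (T₁ x') ≤ σ + K * e :=
    (infEDist_le_infEDist_add_exs y₁ (T₁ x) (T₁ x')).trans <|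
      add_le_add hσ <| (hT₁ x' (hxx'.trans_lt (mem_eball'.1 hqR))).trans (by gcongr)
  calc infEDist (x, y₁ + y₂) (gph (T₁ + T₂)) ≤ infEDist y₁ (T₁ x') + e :=
        infEDist_gph_add_le_of_mem hq
    _ ≤ σ + K * e + e := by gcongr
    _ = (1 + K) * e + σ := by ring

end Graph

section Normed

variable {X Y : Type*} [SeminormedAddCommGroup X] [SeminormedAddCommGroup Y]

lemma mem_closedEBall_zero_of_norm_le {y : Y} {r : ℝ} {R : ℝ≥0∞} (hy : ‖y‖ ≤ r)
    (hr : ENNReal.ofReal r ≤ R) : y ∈ closedEBall 0 R := by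
  rw [mem_closedEBall, edist_zero_right, ← ofReal_norm]
  exact (ENNReal.ofReal_le_ofReal hy).trans hr

lemma mem_closedEBall_zero_prod_iff {r : ℝ} (hr : 0 ≤ r) {x : X} {y : Y} :
    (x, y) ∈ closedEBall ((0 : X), (0 : Y)) (ENNReal.ofReal r) ↔ ‖x‖ ≤ r ∧ ‖y‖ ≤ r := by
  rw [← closedEBall_prod_same, mem_prod, closedEBall_ofReal hr, closedEBall_ofReal hr,
    mem_closedBall_zero_iff, mem_closedBall_zero_iff]

lemma exs_gph_add_inter_closedEBall_le {S₁ T₁ S₂ T₂ : X → Set Y} {ρstar : ℝ≥0∞}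
    {L ρ ρ' ρb ρh : ℝ} (hρ : 0 ≤ ρ)
    (hT₁L : ∀ x ∈ closedBall (0 : X) ρh, ∀ x' ∈ closedBall (0 : X) ρh,
      dl (0 : Y) ρstar (T₁ x) (T₁ x') ≤ ENNReal.ofReal (L * ‖x - x'‖))
    (hS₁ : ∀ x ∈ closedBall (0 : X) ρ, S₁ x ⊆ closedBall (0 : Y) ρ')
    (hT₁ : ∀ x ∈ closedBall (0 : X) ρ, T₁ x ⊆ closedBall (0 : Y) ρ')
    (hρ'ρstar : ENNReal.ofReal ρ' ≤ ρstar) (hρb : ρ + ρ' ≤ ρb)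
    (hρh : ENNReal.ofReal ρ + dl ((0 : X), (0 : Y)) (ENNReal.ofReal ρb) (gph S₂) (gph T₂) <
      ENNReal.ofReal ρh) :
    exs (gph (S₁ + S₂) ∩ closedEBall ((0 : X), (0 : Y)) (ENNReal.ofReal ρ)) (gph (T₁ + T₂)) ≤
      (⨆ x ∈ closedBall (0 : X) ρ, dl (0 : Y) ρstar (S₁ x) (T₁ x)) +
        (1 + ENNReal.ofReal L) * dl ((0 : X), (0 : Y)) (ENNReal.ofReal ρb) (gph S₂) (gph T₂) := by
  set d := dl ((0 : X), (0 : Y)) (ENNReal.ofReal ρb) (gph S₂) (gph T₂)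
  refine iSup₂_le ?_
  rintro ⟨x, -⟩ ⟨⟨y₁, hy₁, y₂, hy₂, rfl⟩, hp⟩
  obtain ⟨hx, hy⟩ := (mem_closedEBall_zero_prod_iff hρ).1 hp
  have hxρ : x ∈ closedBall (0 : X) ρ := mem_closedBall_zero_iff.2 hx
  have hy₁ρ' : ‖y₁‖ ≤ ρ' := mem_closedBall_zero_iff.1 (hS₁ x hxρ hy₁)
  have hy₂ρb : ‖y₂‖ ≤ ρb :=
    calc ‖y₂‖ = ‖y₁ + y₂ - y₁‖ := by rw [add_sub_cancel_left]
      _ ≤ ‖y₁ + y₂‖ + ‖y₁‖ := norm_sub_le _ _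
      _ ≤ ρb := by linarith
  have hρρh : ρ ≤ ρh := ((ENNReal.ofReal_lt_ofReal_iff_of_nonneg hρ).1 (le_self_add.trans_lt hρh)).le
  have hσ : infEDist y₁ (T₁ x) ≤ ⨆ x ∈ closedBall (0 : X) ρ, dl (0 : Y) ρstar (S₁ x) (T₁ x) :=
    (infEDist_le_dl hy₁ (mem_closedEBall_zero_of_norm_le hy₁ρ' hρ'ρstar)).trans
      (le_iSup₂_of_le x hxρ le_rfl)
  have hd : infEDist (x, y₂) (gph T₂) ≤ d := by
    refine infEDist_le_dl (A := gph S₂) hy₂ ((mem_closedEBall_zero_prod_iff ?_).2 ⟨?_, hy₂ρb⟩)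
    all_goals linarith [norm_nonneg y₁]
  have hdR : infEDist (x, y₂) (gph T₂) < ENNReal.ofReal (ρh - ρ) := by
    rw [ENNReal.ofReal_sub _ hρ]
    exact hd.trans_lt (lt_tsub_iff_left.2 hρh)
  have hT₁Lx : ∀ x', edist x x' < ENNReal.ofReal (ρh - ρ) →
      exs (T₁ x) (T₁ x') ≤ ENNReal.ofReal L * edist x x' := by
    intro x' hxx'
    rw [edist_lt_ofReal] at hxx'
    have hx' : x' ∈ closedBall (0 : X) ρh := by
      rw [mem_closedBall, dist_comm] at hxρ ⊢
      linarith [dist_triangle 0 x x']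
    calc exs (T₁ x) (T₁ x') ≤ dl 0 ρstar (T₁ x) (T₁ x') :=
        exs_le_dl_of_subset _ fun z hz =>
          mem_closedEBall_zero_of_norm_le (mem_closedBall_zero_iff.1 (hT₁ x hxρ hz)) hρ'ρstar
      _ ≤ ENNReal.ofReal (L * ‖x - x'‖) :=
        hT₁L x (closedBall_subset_closedBall hρρh hxρ) x' hx'
      _ = ENNReal.ofReal L * edist x x' := by
        rw [ENNReal.ofReal_mul' (norm_nonneg _), edist_dist, dist_eq_norm]
  calc infEDist (x, y₁ + y₂) (gph (T₁ + T₂))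
      ≤ _ + (1 + ENNReal.ofReal L) * infEDist (x, y₂) (gph T₂) :=
        infEDist_gph_add_le ENNReal.ofReal_ne_top hσ hT₁Lx hdR
    _ ≤ _ := by gcongr

end Normed

theorem stmt19_general {X Y : Type*} [NormedAddCommGroup X] [NormedAddCommGroup Y]
    (S₁ T₁ S₂ T₂ : X → Set Y)
    (κ : ℝ → ℝ) (hκ : ∀ r, 0 ≤ κ r) (ρstar : ℝ≥0∞)
    (hS₁L : ∀ r : ℝ, 0 ≤ r → ∀ x ∈ Metric.closedBall (0 : X) r,
      ∀ x' ∈ Metric.closedBall (0 : X) r,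
        dl (0 : Y) ρstar (S₁ x) (S₁ x') ≤ ENNReal.ofReal (κ r * ‖x - x'‖))
    (hT₁L : ∀ r : ℝ, 0 ≤ r → ∀ x ∈ Metric.closedBall (0 : X) r,
      ∀ x' ∈ Metric.closedBall (0 : X) r,
        dl (0 : Y) ρstar (T₁ x) (T₁ x') ≤ ENNReal.ofReal (κ r * ‖x - x'‖))
    (ρ ρ' ρb ρh : ℝ) (hρ : 0 ≤ ρ)
    (hρ'S : ∀ x ∈ Metric.closedBall (0 : X) ρ, S₁ x ⊆ Metric.closedBall (0 : Y) ρ')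
    (hρ'T : ∀ x ∈ Metric.closedBall (0 : X) ρ, T₁ x ⊆ Metric.closedBall (0 : Y) ρ')
    (hρb : ρb ≥ ρ + ρ')
    (hρh : ENNReal.ofReal ρh > ENNReal.ofReal ρ +
      dl ((0 : X), (0 : Y)) (ENNReal.ofReal ρb)
        {p : X × Y | p.2 ∈ S₂ p.1} {p | p.2 ∈ T₂ p.1})
    (hρstar : ρstar > ENNReal.ofReal (3 * ρ' + κ ρh * (ρh - ρ))) :
    dl ((0 : X), (0 : Y)) (ENNReal.ofReal ρ)
        {p : X × Y | p.2 ∈ S₁ p.1 + S₂ p.1} {p | p.2 ∈ T₁ p.1 + T₂ p.1}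
      ≤ (⨆ x ∈ Metric.closedBall (0 : X) ρ, dl (0 : Y) ρstar (S₁ x) (T₁ x))
        + (1 + ENNReal.ofReal (κ ρh)) *
          dl ((0 : X), (0 : Y)) (ENNReal.ofReal ρb)
            {p : X × Y | p.2 ∈ S₂ p.1} {p | p.2 ∈ T₂ p.1} := by
  have hρρh : ρ ≤ ρh :=
    ((ENNReal.ofReal_lt_ofReal_iff_of_nonneg hρ).1 (le_self_add.trans_lt hρh)).le
  have hρ'ρstar : ENNReal.ofReal ρ' ≤ ρstar := by
    refine (ENNReal.ofReal_le_ofReal_iff'.2 ?_).trans hρstar.le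
    rcases le_total ρ' 0 with h | h
    · exact Or.inr h
    · exact Or.inl (by nlinarith [hκ ρh])
  refine max_le (exs_gph_add_inter_closedEBall_le hρ (hT₁L ρh (hρ.trans hρρh)) hρ'S hρ'T
    hρ'ρstar hρb hρh) ?_
  have hTS := exs_gph_add_inter_closedEBall_le (S₂ := T₂) (T₂ := S₂) hρ
    (hS₁L ρh (hρ.trans hρρh)) hρ'T hρ'S hρ'ρstar hρb (by rwa [dl_comm])
  simp only [dl_comm _ _ (T₁ _), dl_comm _ _ (gph T₂)] at hTS
  exact hTS

/-- sums of set-valued mappings under a Lipschitz property. -/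
theorem stmt19 {X Y : Type*} [NormedAddCommGroup X] [NormedAddCommGroup Y]
    (S₁ T₁ S₂ T₂ : X → Set Y)
    (hS₁ne : ∀ x, (S₁ x).Nonempty) (hT₁ne : ∀ x, (T₁ x).Nonempty)
    (κ : ℝ → ℝ) (hκ : ∀ r, 0 ≤ κ r) (ρstar : ℝ≥0∞)
    (hS₁L : ∀ r : ℝ, 0 ≤ r → ∀ x ∈ Metric.closedBall (0 : X) r,
      ∀ x' ∈ Metric.closedBall (0 : X) r,
        dl (0 : Y) ρstar (S₁ x) (S₁ x') ≤ ENNReal.ofReal (κ r * ‖x - x'‖))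
    (hT₁L : ∀ r : ℝ, 0 ≤ r → ∀ x ∈ Metric.closedBall (0 : X) r,
      ∀ x' ∈ Metric.closedBall (0 : X) r,
        dl (0 : Y) ρstar (T₁ x) (T₁ x') ≤ ENNReal.ofReal (κ r * ‖x - x'‖))
    (hGS₂ : {p : X × Y | p.2 ∈ S₂ p.1}.Nonempty) (hGT₂ : {p : X × Y | p.2 ∈ T₂ p.1}.Nonempty)
    (ρ ρ' ρb ρh : ℝ) (hρ : 0 ≤ ρ)
    (hρ'S : ∀ x ∈ Metric.closedBall (0 : X) ρ, S₁ x ⊆ Metric.closedBall (0 : Y) ρ')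
    (hρ'T : ∀ x ∈ Metric.closedBall (0 : X) ρ, T₁ x ⊆ Metric.closedBall (0 : Y) ρ')
    (hρb : ρb ≥ ρ + ρ')
    (hρh : ENNReal.ofReal ρh > ENNReal.ofReal ρ +
      dl ((0 : X), (0 : Y)) (ENNReal.ofReal ρb)
        {p : X × Y | p.2 ∈ S₂ p.1} {p | p.2 ∈ T₂ p.1})
    (hρstar : ρstar > ENNReal.ofReal (3 * ρ' + κ ρh * (ρh - ρ))) :
    dl ((0 : X), (0 : Y)) (ENNReal.ofReal ρ)
        {p : X × Y | p.2 ∈ S₁ p.1 + S₂ p.1} {p | p.2 ∈ T₁ p.1 + T₂ p.1}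
      ≤ (⨆ x ∈ Metric.closedBall (0 : X) ρ, dl (0 : Y) ρstar (S₁ x) (T₁ x))
        + (1 + ENNReal.ofReal (κ ρh)) *
          dl ((0 : X), (0 : Y)) (ENNReal.ofReal ρb)
            {p : X × Y | p.2 ∈ S₂ p.1} {p | p.2 ∈ T₂ p.1} :=
  stmt19_general S₁ T₁ S₂ T₂ κ hκ ρstar hS₁L hT₁L ρ ρ' ρb ρh hρ hρ'S hρ'T hρb hρh hρstar
end
end
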